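/- Let n ≥ 2, for each j = 1, …, n let (l^j, r^j) be a Cantor-set construction with density ratio at least x_j > 0, and assume Σ_{j=1}^n x_j/(x_j + 1) ≥ 1. Let i_1, …, i_n ≥ 1 be indices such that the intervals I_{i_1}^1, …, I_{i_n}^n are comparable, i.e. for all j, k: length(I_{i_j}^j) ≥ (x_j/(x_j + 1))·(x_k + 1)·length(G_{i_k}^k). Then for every k: Σ_{j=1}^n I_{i_j}^j = (Σ_{j≠k} I_{i_j}^j + I_{2i_k}^k) ∪ (Σ_{j≠k} I_{i_j}^j + I_{2i_k+1}^k), where sums of intervals are pointwise. -/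

import Mathlib

open Pointwise

structure CantorConstr where
  l : ℕ → ℝ
  r : ℕ → ℝ
  lt : ∀ i : ℕ, 1 ≤ i → l i < r i
  left_eq : ∀ i : ℕ, 1 ≤ i → l (2 * i) = l i
  right_eq : ∀ i : ℕ, 1 ≤ i → r (2 * i + 1) = r i
  gap_lt : ∀ i : ℕ, 1 ≤ i → r (2 * i) < l (2 * i + 1)

/-- The Cantor set associated to a construction: the initial interval minus all the gaps. -/
def CantorConstr.cantorSet (c : CantorConstr) : Set ℝ :=
  Set.Icc (c.l 1) (c.r 1) \ ⋃ (i : ℕ) (_ : 1 ≤ i), Set.Ioo (c.r (2 * i)) (c.l (2 * i + 1))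

/-- The construction has density ratio at least `x`. -/
def CantorConstr.densityGE (c : CantorConstr) (x : ℝ) : Prop :=
  ∀ i : ℕ, 1 ≤ i →
    min (c.r (2 * i) - c.l (2 * i)) (c.r (2 * i + 1) - c.l (2 * i + 1)) ≥
      x * (c.l (2 * i + 1) - c.r (2 * i))

/-- The length of the gap `G_i`. -/
def CantorConstr.gapLen (c : CantorConstr) (i : ℕ) : ℝ := c.l (2 * i + 1) - c.r (2 * i)

/-- The construction is hole-decreasing. -/
def CantorConstr.holeDecr (c : CantorConstr) : Prop :=
  ∀ i : ℕ, 1 ≤ i → c.gapLen (2 * i) ≤ c.gapLen i ∧ c.gapLen (2 * i + 1) ≤ c.gapLen i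

/-!
A sum of compact intervals is the interval between the sums of the endpoints. Removing the gap
`G` from one summand `I_k` therefore leaves the sum unchanged as soon as the gap is no longer
than the total length of the other summands. Comparability gives
`|I_j| ≥ x_j/(x_j+1) · (x_k+1)|G|` for `j ≠ k`, and
`∑_{j ≠ k} x_j/(x_j+1) ≥ 1 - x_k/(x_k+1) = 1/(x_k+1)`, so these lengths add up to at least
`|G|`.
-/

open Finset Function

section IntervalSums

variable {ι : Type*} [Fintype ι]

theorem setOf_sum_mem_Icc (a b : ι → ℝ) (hab : a ≤ b) :
    {s : ℝ | ∃ f : ι → ℝ, (∀ j, f j ∈ Set.Icc (a j) (b j)) ∧ s = ∑ j, f j} =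
      Set.Icc (∑ j, a j) (∑ j, b j) := by
  ext s
  constructor
  · rintro ⟨f, hf, rfl⟩
    exact ⟨sum_le_sum fun j _ => (hf j).1, sum_le_sum fun j _ => (hf j).2⟩
  · intro hs
    have hconn := (isPreconnected_univ_pi fun j => isPreconnected_Icc (a := a j) (b := b j)).image
      (fun f : ι → ℝ => ∑ j, f j)
      (continuous_finsetSum _ fun j _ => continuous_apply j).continuousOn
    obtain ⟨f, hf, rfl⟩ := hconn.Icc_subset
      ⟨a, fun j _ => ⟨le_rfl, hab j⟩, rfl⟩ ⟨b, fun j _ => ⟨hab j, le_rfl⟩, rfl⟩ hs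
    exact ⟨f, fun j => hf j (Set.mem_univ j), rfl⟩

theorem setOf_sum_mem_update_Icc [DecidableEq ι] (a b : ι → ℝ) (hab : a ≤ b) (k : ι)
    {u v : ℝ} (huv : u ≤ v) :
    {s : ℝ | ∃ f : ι → ℝ, (∀ j, j ≠ k → f j ∈ Set.Icc (a j) (b j)) ∧
        f k ∈ Set.Icc u v ∧ s = ∑ j, f j} =
      Set.Icc (∑ j, update a k u j) (∑ j, update b k v j) := by
  rw [← setOf_sum_mem_Icc]
  · have hmem (f : ι → ℝ) :
        (∀ j, f j ∈ Set.Icc (update a k u j) (update b k v j)) ↔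
          (∀ j, j ≠ k → f j ∈ Set.Icc (a j) (b j)) ∧ f k ∈ Set.Icc u v := by
      constructor
      · intro h
        exact ⟨fun j hj => by simpa [hj] using h j, by simpa using h k⟩
      · rintro ⟨h, hk⟩ j
        rcases eq_or_ne j k with rfl | hj
        · simpa using hk
        · simpa [hj] using h j hj
    simp only [hmem, and_assoc]
  · intro j
    rcases eq_or_ne j k with rfl | hj
    · simpa using huv
    · simpa [hj] using hab j

theorem Icc_sum_eq_union_of_le_sum_erase [DecidableEq ι] (a b : ι → ℝ) (k : ι) {u v : ℝ}
    (hv : a k ≤ v) (hu : u ≤ b k) (hgap : v - u ≤ ∑ j ∈ univ.erase k, (b j - a j)) :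
    Set.Icc (∑ j, a j) (∑ j, b j) =
      Set.Icc (∑ j, a j) (∑ j, update b k u j) ∪
        Set.Icc (∑ j, update a k v j) (∑ j, b j) := by
  simp only [sum_update_of_mem (mem_univ k), ← add_sum_erase univ a (mem_univ k),
    ← add_sum_erase univ b (mem_univ k), sdiff_singleton_eq_erase]
  rw [sum_sub_distrib] at hgap
  rw [Set.Icc_union_Icc' (by linarith) (by linarith), min_eq_left (by linarith),
    max_eq_right (by linarith)]

theorem one_sub_mul_le_sum_erase [DecidableEq ι] (w ℓ : ι → ℝ) (k : ι) {G : ℝ}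
    (hw : 1 ≤ ∑ j, w j) (hG : 0 ≤ G) (hℓ : ∀ j ≠ k, w j * G ≤ ℓ j) :
    (1 - w k) * G ≤ ∑ j ∈ univ.erase k, ℓ j := by
  have hrest : 1 - w k ≤ ∑ j ∈ univ.erase k, w j := by
    linarith [add_sum_erase univ w (mem_univ k)]
  calc (1 - w k) * G ≤ (∑ j ∈ univ.erase k, w j) * G := mul_le_mul_of_nonneg_right hrest hG
    _ = ∑ j ∈ univ.erase k, w j * G := sum_mul _ _ _
    _ ≤ ∑ j ∈ univ.erase k, ℓ j := sum_le_sum fun j hj => hℓ j (ne_of_mem_erase hj)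

end IntervalSums

namespace CantorConstr

variable (c : CantorConstr) {i : ℕ}

theorem gapLen_nonneg (hi : 1 ≤ i) : 0 ≤ c.gapLen i :=
  sub_nonneg.2 (c.gap_lt i hi).le

theorem l_le_l_two_mul_add_one (hi : 1 ≤ i) : c.l i ≤ c.l (2 * i + 1) := by
  linarith [c.left_eq i hi, c.lt (2 * i) (by omega), c.gap_lt i hi]

theorem r_two_mul_le_r (hi : 1 ≤ i) : c.r (2 * i) ≤ c.r i := by
  linarith [c.right_eq i hi, c.lt (2 * i + 1) (by omega), c.gap_lt i hi]

end CantorConstr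

theorem comparable_sum_splits (n : ℕ)
    (c : Fin n → CantorConstr) (x : Fin n → ℝ) (idx : Fin n → ℕ)
    (hx : ∀ j, 0 < x j)
    (h1 : (∑ j, x j / (x j + 1)) ≥ 1)
    (hidx : ∀ j, 1 ≤ idx j)
    (hcomp : ∀ j k, (c j).r (idx j) - (c j).l (idx j) ≥
      x j / (x j + 1) * ((x k + 1) * ((c k).gapLen (idx k)))) :
    ∀ k : Fin n,
      {s : ℝ | ∃ f : Fin n → ℝ,
        (∀ j, f j ∈ Set.Icc ((c j).l (idx j)) ((c j).r (idx j))) ∧ s = ∑ j, f j} =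
      {s : ℝ | ∃ f : Fin n → ℝ,
        (∀ j, j ≠ k → f j ∈ Set.Icc ((c j).l (idx j)) ((c j).r (idx j))) ∧
        f k ∈ Set.Icc ((c k).l (2 * idx k)) ((c k).r (2 * idx k)) ∧ s = ∑ j, f j} ∪
      {s : ℝ | ∃ f : Fin n → ℝ,
        (∀ j, j ≠ k → f j ∈ Set.Icc ((c j).l (idx j)) ((c j).r (idx j))) ∧
        f k ∈ Set.Icc ((c k).l (2 * idx k + 1)) ((c k).r (2 * idx k + 1)) ∧ s = ∑ j, f j} := by
  intro k
  have hk := hidx k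
  have hxk : 0 < x k + 1 := by linarith [hx k]
  have hle : (fun j => (c j).l (idx j)) ≤ fun j => (c j).r (idx j) :=
    fun j => ((c j).lt _ (hidx j)).le
  have hgap :
      (c k).gapLen (idx k) ≤ ∑ j ∈ univ.erase k, ((c j).r (idx j) - (c j).l (idx j)) :=
    calc (c k).gapLen (idx k)
      _ = (1 - x k / (x k + 1)) * ((x k + 1) * (c k).gapLen (idx k)) := by field_simp; ring
      _ ≤ _ := one_sub_mul_le_sum_erase _ _ k h1
          (mul_nonneg hxk.le ((c k).gapLen_nonneg hk)) fun j _ => hcomp j k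
  rw [setOf_sum_mem_Icc _ _ hle, setOf_sum_mem_update_Icc _ _ hle k ((c k).lt _ (by omega)).le,
    setOf_sum_mem_update_Icc _ _ hle k ((c k).lt _ (by omega)).le,
    (c k).left_eq _ hk, (c k).right_eq _ hk, update_eq_self, update_eq_self]
  exact Icc_sum_eq_union_of_le_sum_erase _ _ k ((c k).l_le_l_two_mul_add_one hk)
    ((c k).r_two_mul_le_r hk) hgap
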